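/- arXiv:2305.03581 — 7 statements merged into one kernel-verified Lean document; each statement's English description precedes it below -/
import Mathlib

section
/- In a left normal band, for any family (x_j)_{j<n} and any function φ: m → n (with n, m ≥ 1), D(D^R_n((x_j)_{j<n}), D^R_m((x_{φ(k)})_{k<m})) = D^R_n((x_j)_{j<n}); that is, the right iterate over a family absorbs the right iterate over any subfamily indexed through φ. -/
/-- Right iterates of a binary operation. -/
def DR {A : Type*} (D : A → A → A) : (n : ℕ) → (Fin (n + 1) → A) → A
  | 0, x => x 0
  | n + 1, x => D (x 0) (DR D n (fun k => x k.succ))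

lemma dr_absorb_elem {A : Type*} (D : A → A → A)
    (h1 : ∀ x, D x x = x)
    (h2 : ∀ x y z, D x (D y z) = D (D x y) z)
    (h3 : ∀ x y z, D x (D y z) = D x (D z y)) :
    ∀ (n : ℕ) (x : Fin (n + 1) → A) (j : Fin (n + 1)),
      D (DR D n x) (x j) = DR D n x := by
  intro n
  induction n with
  | zero => intro x j; rw [Fin.fin_one_eq_zero j]; simp [DR, h1]
  | succ n ih =>
    intro x j
    cases j using Fin.cases with
    | zero =>
      show D (D (x 0) (DR D n fun k => x k.succ)) (x 0) = _
      rw [← h2, h3, h2, h1]; rfl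
    | succ k =>
      show D (D (x 0) (DR D n fun k => x k.succ)) (x k.succ) = _
      rw [← h2, ih (fun k => x k.succ) k]; rfl

/-- In a left normal band, the right iterate over a family absorbs the
right iterate over any subfamily indexed through `φ`. -/
theorem dr_absorb_subfamily {A : Type*} (D : A → A → A)
    (h1 : ∀ x, D x x = x)
    (h2 : ∀ x y z, D x (D y z) = D (D x y) z)
    (h3 : ∀ x y z, D x (D y z) = D x (D z y)) :
    ∀ (n m : ℕ) (x : Fin (n + 1) → A) (φ : Fin (m + 1) → Fin (n + 1)),
      D (DR D n x) (DR D m (fun k => x (φ k))) = DR D n x := by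
  intro n m
  induction m with
  | zero => intro x φ; exact dr_absorb_elem D h1 h2 h3 n x (φ 0)
  | succ m ih =>
    intro x φ
    show D (DR D n x) (D (x (φ 0)) (DR D m fun k => x (φ k.succ))) = _
    rw [h2, dr_absorb_elem D h1 h2 h3 n x (φ 0), ih x (fun k => φ k.succ)]
end

section
/- Let (A,D) be a left normal band and Φ^D its induced congruence. The relation on A/Φ^D defined by [x] ≤ [y] iff there exist x' ∈ [x] and y' ∈ [y] with D(y',x') = y' is a partial order (reflexive, antisymmetric, transitive). -/
/-- The relation induced by `D`: `(x, y) ∈ Φ^D` iff `D x y = x` and `D y x = y`. -/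
def Phi {A : Type*} (D : A → A → A) (x y : A) : Prop :=
  D x y = x ∧ D y x = y

/-- The induced relation on `Φ^D`-classes, stated on representatives:
`[x] ≤ [y]` iff there exist `x' ∈ [x]` and `y' ∈ [y]` with `D y' x' = y'`. -/
def PhiLE {A : Type*} (D : A → A → A) (x y : A) : Prop :=
  ∃ x' y', Phi D x x' ∧ Phi D y y' ∧ D y' x' = y'

/-- In a left normal band, `PhiLE D x y` is equivalent to `D y x = y`. -/
lemma phiLE_iff {A : Type*} (D : A → A → A)
    (h1 : ∀ x, D x x = x)
    (h2 : ∀ x y z, D x (D y z) = D (D x y) z)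
    (h3 : ∀ x y z, D x (D y z) = D x (D z y)) (x y : A) :
    PhiLE D x y ↔ D y x = y := by
  constructor
  · rintro ⟨x', y', ⟨hxx', hx'x⟩, ⟨hyy', hy'y⟩, hd⟩
    -- Step 1: D y' x = y'
    have e1 : y' = D (D y' x) x' := by
      conv_lhs => rw [← hd, ← hx'x, h3, h2]
    have e2 : D y' x = y' := by
      calc D y' x = D (D (D y' x) x') x := by rw [← e1]
        _ = D (D y' x) (D x' x) := by rw [h2]
        _ = D (D y' x) x' := by rw [hx'x]
        _ = y' := by rw [← e1]
    -- Step 2: D y x = y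
    calc D y x = D (D y y') x := by rw [hyy']
      _ = D y (D y' x) := by rw [h2]
      _ = D y y' := by rw [e2]
      _ = y := hyy'
  · intro h
    exact ⟨x, y, ⟨h1 x, h1 x⟩, ⟨h1 y, h1 y⟩, h⟩

/-- In a left normal band, the induced relation on `A/Φ^D` is a partial order:
it is reflexive, antisymmetric (two classes related both ways are equal, i.e.
the representatives are `Φ^D`-related), and transitive. -/
theorem phiLE_partial_order {A : Type*} (D : A → A → A)
    (h1 : ∀ x, D x x = x)
    (h2 : ∀ x y z, D x (D y z) = D (D x y) z)
    (h3 : ∀ x y z, D x (D y z) = D x (D z y)) :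
    (∀ x : A, PhiLE D x x) ∧
      (∀ x y : A, PhiLE D x y → PhiLE D y x → Phi D x y) ∧
      (∀ x y z : A, PhiLE D x y → PhiLE D y z → PhiLE D x z) := by
  simp only [phiLE_iff D h1 h2 h3]
  refine ⟨fun x => h1 x, fun x y hxy hyx => ⟨hyx, hxy⟩, fun x y z hxy hyz => ?_⟩
  calc D z x = D (D z y) x := by rw [hyz]
    _ = D z (D y x) := by rw [h2]
    _ = D z y := by rw [hxy]
    _ = z := hyz
end

section
/- Let (A,F,D) be a Płonka Σ-algebra (Σ without nullary operations). For every n-ary operation symbol σ, every k < n, and every family (x_j)_{j<n}, D(σ^A((x_j)_{j<n}), x_k) = σ^A((x_j)_{j<n}). -/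
lemma DR_absorb {A : Type*} (D : A → A → A)
    (h1 : ∀ x, D x x = x)
    (h2 : ∀ x y z, D x (D y z) = D (D x y) z)
    (h3 : ∀ x y z, D x (D y z) = D x (D z y)) :
    ∀ (n : ℕ) (x : Fin (n + 1) → A) (k : Fin (n + 1)),
      D (DR D n x) (x k) = DR D n x := by
  intro n
  induction n with
  | zero =>
    intro x k
    have : k = 0 := Fin.fin_one_eq_zero k
    subst this
    exact h1 _
  | succ n ih =>
    intro x k
    refine Fin.cases ?_ ?_ k
    · show D (D (x 0) (DR D n fun k => x k.succ)) (x 0) = _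
      rw [← h2, h3, h2, h1]; rfl
    · intro j
      show D (D (x 0) (DR D n fun k => x k.succ)) (x j.succ) = _
      rw [← h2, ih (fun k => x k.succ) j]; rfl

/-- In a Płonka Σ-algebra (Σ without nullary symbols, here `Sig n` is the set
of `(n+1)`-ary operation symbols), an operation value absorbs each of its
arguments on the right. -/
theorem plonka_absorb_argument {A : Type*} (Sig : ℕ → Type*)
    (F : ∀ n : ℕ, Sig n → (Fin (n + 1) → A) → A)
    (D : A → A → A)
    (h1 : ∀ x, D x x = x)
    (h2 : ∀ x y z, D x (D y z) = D (D x y) z)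
    (h3 : ∀ x y z, D x (D y z) = D x (D z y))
    (h4 : ∀ (n : ℕ) (σ : Sig n) (x : Fin (n + 1) → A) (y : A),
      D (F n σ x) y = F n σ (fun j => D (x j) y))
    (h5 : ∀ (n : ℕ) (σ : Sig n) (x : Fin (n + 1) → A) (y : A),
      D y (F n σ x) = D y (DR D n x)) :
    ∀ (n : ℕ) (σ : Sig n) (x : Fin (n + 1) → A) (k : Fin (n + 1)),
      D (F n σ x) (x k) = F n σ x := by
  intro n σ x k
  have e1 : D (F n σ x) (x k) = D (F n σ x) (D (F n σ x) (x k)) := by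
    rw [h2, h1]
  rw [e1, h3, h5, h3, DR_absorb D h1 h2 h3, ← h5, h1]
end

section
/- Let (A,F,D) be a Płonka Σ-algebra. For every n-ary σ and all families (x_j)_{j<n}, (y_j)_{j<n}: D(σ^A((x_j)_{j<n}), σ^A((y_j)_{j<n})) = σ^A((D(x_j, y_j))_{j<n}); equivalently, D: A × A → A is a Σ-homomorphism from A² to A. -/
/-! Right translations `t ↦ D t b` of a left normal band commute and are idempotent, so `D t w`
depends only on `t` and the set of letters of the word `w`. Hence, with `X`, `Y`, `Z` the products
of `x`, `y` and `(D (x k) (y k))ₖ`, both `D (D t X) Y` and `D (D t (y j)) Z` equal `D t Z`.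
By (D4) and (D5), `σ x = σ (D (x j) X)ⱼ` and `D (σ x) (σ y) = σ (D (D (x j) X) Y)ⱼ`, so both sides
of the theorem are `σ (D (x j) Z)ⱼ`. -/

section LeftNormalBand

variable {A : Type*} {D : A → A → A}

theorem right_comm_of_leftNormal (assoc : ∀ x y z, D x (D y z) = D (D x y) z)
    (normal : ∀ x y z, D x (D y z) = D x (D z y)) (a b c : A) :
    D (D a b) c = D (D a c) b := by
  rw [← assoc, normal, assoc]

theorem DR_mul_DR (assoc : ∀ x y z, D x (D y z) = D (D x y) z)
    (normal : ∀ x y z, D x (D y z) = D x (D z y)) :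
    ∀ (n : ℕ) (x y : Fin (n + 1) → A) (t : A),
      D (D t (DR D n x)) (DR D n y) = D t (DR D n fun k => D (x k) (y k))
  | 0, x, y, t => (assoc t (x 0) (y 0)).symm
  | n + 1, x, y, t => by
    let x' : Fin (n + 1) → A := fun k => x k.succ
    let y' : Fin (n + 1) → A := fun k => y k.succ
    calc D (D t (D (x 0) (DR D n x'))) (D (y 0) (DR D n y'))
        = D (D (D (D t (x 0)) (DR D n x')) (y 0)) (DR D n y') := by rw [assoc, assoc]
      _ = D (D (D (D t (x 0)) (y 0)) (DR D n x')) (DR D n y') := by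
          rw [right_comm_of_leftNormal assoc normal (D t (x 0))]
      _ = D (D (D t (x 0)) (y 0)) (DR D n fun k => D (x' k) (y' k)) := DR_mul_DR assoc normal ..
      _ = D t (D (D (x 0) (y 0)) (DR D n fun k => D (x' k) (y' k))) := by rw [assoc, assoc]

theorem DR_mul_apply_self (idem : ∀ x, D x x = x) (assoc : ∀ x y z, D x (D y z) = D (D x y) z)
    (normal : ∀ x y z, D x (D y z) = D x (D z y)) :
    ∀ (n : ℕ) (x : Fin (n + 1) → A) (j : Fin (n + 1)), D (DR D n x) (x j) = DR D n x
  | 0, x, j => by rw [Fin.fin_one_eq_zero j]; exact idem (x 0)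
  | n + 1, x, j => by
    show D (D (x 0) (DR D n _)) (x j) = D (x 0) (DR D n _)
    cases j using Fin.cases with
    | zero => rw [right_comm_of_leftNormal assoc normal, idem]
    | succ k => rw [← assoc, DR_mul_apply_self idem assoc normal n _ k]

theorem mul_apply_mul_DR_zip (idem : ∀ x, D x x = x)
    (assoc : ∀ x y z, D x (D y z) = D (D x y) z) (normal : ∀ x y z, D x (D y z) = D x (D z y))
    (n : ℕ) (x y : Fin (n + 1) → A) (j : Fin (n + 1)) (t : A) :
    D (D t (y j)) (DR D n fun k => D (x k) (y k)) = D t (DR D n fun k => D (x k) (y k)) := by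
  have right_comm := right_comm_of_leftNormal assoc normal
  rw [← DR_mul_DR assoc normal, ← DR_mul_DR assoc normal]
  calc D (D (D t (y j)) (DR D n x)) (DR D n y)
      = D (D (D t (DR D n x)) (DR D n y)) (y j) := by rw [right_comm t, right_comm (D t _)]
    _ = D (D t (DR D n x)) (DR D n y) := by rw [← assoc, DR_mul_apply_self idem assoc normal]

end LeftNormalBand

section Plonka

variable {A : Type*} {D : A → A → A} {n : ℕ} {f : (Fin (n + 1) → A) → A}

theorem apply_eq_apply_mul_DR (idem : ∀ x, D x x = x)
    (hD4 : ∀ x y, D (f x) y = f fun j => D (x j) y) (hD5 : ∀ x y, D y (f x) = D y (DR D n x))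
    (x : Fin (n + 1) → A) :
    f x = f fun j => D (x j) (DR D n x) :=
  calc f x = D (f x) (f x) := (idem _).symm
    _ = D (f x) (DR D n x) := hD5 ..
    _ = f fun j => D (x j) (DR D n x) := hD4 ..

theorem apply_mul_apply (idem : ∀ x, D x x = x) (assoc : ∀ x y z, D x (D y z) = D (D x y) z)
    (hD4 : ∀ x y, D (f x) y = f fun j => D (x j) y) (hD5 : ∀ x y, D y (f x) = D y (DR D n x))
    (x y : Fin (n + 1) → A) :
    D (f x) (f y) = f fun j => D (D (x j) (DR D n x)) (DR D n y) :=
  calc D (f x) (f y) = D (D (f x) (DR D n x)) (f y) := by rw [← hD5, idem]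
    _ = D (f x) (D (DR D n x) (DR D n y)) := by rw [← assoc, hD5]
    _ = f fun j => D (D (x j) (DR D n x)) (DR D n y) := by simp only [hD4, assoc]

end Plonka

/-- In a Płonka Σ-algebra, the Płonka operator `D` is a Σ-homomorphism from
`A²` to `A`. -/
theorem plonka_operator_hom {A : Type*} (Sig : ℕ → Type*)
    (F : ∀ n : ℕ, Sig n → (Fin (n + 1) → A) → A)
    (D : A → A → A)
    (h1 : ∀ x, D x x = x)
    (h2 : ∀ x y z, D x (D y z) = D (D x y) z)
    (h3 : ∀ x y z, D x (D y z) = D x (D z y))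
    (h4 : ∀ (n : ℕ) (σ : Sig n) (x : Fin (n + 1) → A) (y : A),
      D (F n σ x) y = F n σ (fun j => D (x j) y))
    (h5 : ∀ (n : ℕ) (σ : Sig n) (x : Fin (n + 1) → A) (y : A),
      D y (F n σ x) = D y (DR D n x)) :
    ∀ (n : ℕ) (σ : Sig n) (x y : Fin (n + 1) → A),
      D (F n σ x) (F n σ y) = F n σ (fun j => D (x j) (y j)) := by
  intro n σ x y
  rw [apply_mul_apply h1 h2 (h4 n σ) (h5 n σ),
    apply_eq_apply_mul_DR h1 (h4 n σ) (h5 n σ) fun j => D (x j) (y j)]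
  congr 1 with j
  rw [DR_mul_DR h2 h3, mul_apply_mul_DR_zip h1 h2 h3]
end

section
/- Let (A,F,D) be a Płonka Σ-algebra. The congruence Φ^D induced by D on the left normal band (A,D) is also a congruence of the Σ-algebra A: if (x_j, y_j) ∈ Φ^D for every j < n, then (σ^A((x_j)), σ^A((y_j))) ∈ Φ^D for every n-ary σ. -/
section Aux

variable {A : Type*}

/-- If `Phi D u v` then `D a u = D a v` for all `a`. -/
theorem phi_right_eq (D : A → A → A)
    (h3 : ∀ x y z, D x (D y z) = D x (D z y)) {u v : A} (h : Phi D u v) (a : A) : D a u = D a v := by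
  calc D a u = D a (D u v) := by rw [h.1]
    _ = D a (D v u) := h3 a u v
    _ = D a v := by rw [h.2]

/-- `Phi` is closed under `D`. -/
theorem phi_D (D : A → A → A)
    (h1 : ∀ x, D x x = x)
    (h2 : ∀ x y z, D x (D y z) = D (D x y) z)
    (h3 : ∀ x y z, D x (D y z) = D x (D z y)) {u u' v v' : A} (hu : Phi D u u') (hv : Phi D v v') :
    Phi D (D u v) (D u' v') := by
  have key : ∀ a : A, D a (D u' v') = D a (D u v) := fun a => by
    rw [h2, phi_right_eq D h3 ⟨hu.2, hu.1⟩, ← h2, phi_right_eq D h3 ⟨hv.2, hv.1⟩]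
  have key' : ∀ a : A, D a (D u v) = D a (D u' v') := fun a => by
    rw [h2, phi_right_eq D h3 hu, ← h2, phi_right_eq D h3 hv]
  exact ⟨by rw [key, h1], by rw [key', h1]⟩

/-- `Phi` is closed under `DR`. -/
theorem phi_DR (D : A → A → A)
    (h1 : ∀ x, D x x = x)
    (h2 : ∀ x y z, D x (D y z) = D (D x y) z)
    (h3 : ∀ x y z, D x (D y z) = D x (D z y)) : ∀ (n : ℕ) (x y : Fin (n + 1) → A),
    (∀ j, Phi D (x j) (y j)) → Phi D (DR D n x) (DR D n y) := by
  intro n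
  induction n with
  | zero => intro x y h; exact h 0
  | succ n ih =>
    intro x y h
    exact phi_D D h1 h2 h3 (h 0)
      (ih (fun k => x k.succ) (fun k => y k.succ) (fun k => h k.succ))

end Aux

/-- In a Płonka Σ-algebra, the congruence `Φ^D` induced by the Płonka operator
`D` is also a congruence of the underlying Σ-algebra. -/
theorem plonka_phi_algebra_congruence {A : Type*} (Sig : ℕ → Type*)
    (F : ∀ n : ℕ, Sig n → (Fin (n + 1) → A) → A)
    (D : A → A → A)
    (h1 : ∀ x, D x x = x)
    (h2 : ∀ x y z, D x (D y z) = D (D x y) z)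
    (h3 : ∀ x y z, D x (D y z) = D x (D z y))
    (h4 : ∀ (n : ℕ) (σ : Sig n) (x : Fin (n + 1) → A) (y : A),
      D (F n σ x) y = F n σ (fun j => D (x j) y))
    (h5 : ∀ (n : ℕ) (σ : Sig n) (x : Fin (n + 1) → A) (y : A),
      D y (F n σ x) = D y (DR D n x)) :
    ∀ (n : ℕ) (σ : Sig n) (x y : Fin (n + 1) → A),
      (∀ j, Phi D (x j) (y j)) → Phi D (F n σ x) (F n σ y) := by
  intro n σ x y h
  have hDR : Phi D (DR D n x) (DR D n y) := phi_DR D h1 h2 h3 n x y h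
  constructor
  · calc D (F n σ x) (F n σ y) = D (F n σ x) (DR D n y) := h5 n σ y _
      _ = D (F n σ x) (DR D n x) := phi_right_eq D h3 ⟨hDR.2, hDR.1⟩ _
      _ = D (F n σ x) (F n σ x) := (h5 n σ x _).symm
      _ = F n σ x := h1 _
  · calc D (F n σ y) (F n σ x) = D (F n σ y) (DR D n x) := h5 n σ x _
      _ = D (F n σ y) (DR D n y) := phi_right_eq D h3 hDR _
      _ = D (F n σ y) (F n σ y) := (h5 n σ y _).symm
      _ = F n σ y := h1 _
end

section
/- Let (A,F,D) be a Płonka Σ-algebra, and let [x] ≤ [y] in A/Φ^D (i.e., there exist x' ∈ [x], y' ∈ [y] with D(y',x')=y'). Then the map f: [x] → [y] given by f(z) = D(z,y) is well-defined (independent of the chosen representative y of the class [y], and lands in [y]) and is a Σ-homomorphism between the subalgebras determined by [x] and [y]. Moreover f_{[x],[x]} = id, and if [x] ≤ [y] ≤ [z] then f_{[y],[z]} ∘ f_{[x],[y]} = f_{[x],[z]}. -/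
/-- In a Płonka Σ-algebra, if `[x] ≤ [y]`, then `z ↦ D z y` is a well-defined
Σ-homomorphism from the subalgebra `[x]` to the subalgebra `[y]`; it does not
depend on the chosen representative of `[y]`, it lands in `[y]`, it is the
identity when `[x] = [y]` (taking `y = x`), and these maps compose
functorially along `[x] ≤ [y] ≤ [z]`. -/
theorem plonka_transition_hom {A : Type*} (Sig : ℕ → Type*)
    (F : ∀ n : ℕ, Sig n → (Fin (n + 1) → A) → A)
    (D : A → A → A)
    (h1 : ∀ x, D x x = x)
    (h2 : ∀ x y z, D x (D y z) = D (D x y) z)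
    (h3 : ∀ x y z, D x (D y z) = D x (D z y))
    (h4 : ∀ (n : ℕ) (σ : Sig n) (x : Fin (n + 1) → A) (y : A),
      D (F n σ x) y = F n σ (fun j => D (x j) y))
    (h5 : ∀ (n : ℕ) (σ : Sig n) (x : Fin (n + 1) → A) (y : A),
      D y (F n σ x) = D y (DR D n x)) :
    ∀ x y : A, PhiLE D x y →
      ((∀ z : A, Phi D z x → ∀ y' : A, Phi D y y' → D z y = D z y') ∧
        (∀ z : A, Phi D z x → Phi D (D z y) y) ∧
        (∀ (n : ℕ) (σ : Sig n) (v : Fin (n + 1) → A), (∀ j, Phi D (v j) x) →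
          D (F n σ v) y = F n σ (fun j => D (v j) y)) ∧
        (∀ z : A, Phi D z x → D z x = z) ∧
        (∀ w : A, PhiLE D y w →
          ∀ t : A, Phi D t x → D (D t y) w = D t w)) := by
  rintro x y ⟨x', y', hxx', hyy', hyx'⟩
  refine ⟨?_, ?_, fun n σ v _ => h4 n σ v y, fun z hz => hz.1, ?_⟩
  · intro z _ y₁ hy₁
    calc D z y = D z (D y y₁) := by rw [hy₁.1]
      _ = D z (D y₁ y) := h3 _ _ _
      _ = D z y₁ := by rw [hy₁.2]
  · intro z hz
    have hx'z : D x' z = x' := by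
      calc D x' z = D (D x' x) z := by rw [hxx'.2]
        _ = D x' (D x z) := (h2 _ _ _).symm
        _ = D x' x := by rw [hz.2]
        _ = x' := hxx'.2
    have hy'z : D y' z = y' := by
      calc D y' z = D (D y' x') z := by rw [hyx']
        _ = D y' (D x' z) := (h2 _ _ _).symm
        _ = D y' x' := by rw [hx'z]
        _ = y' := hyx'
    have hyz : D y z = y := by
      calc D y z = D (D y y') z := by rw [hyy'.1]
        _ = D y (D y' z) := (h2 _ _ _).symm
        _ = D y y' := by rw [hy'z]
        _ = y := hyy'.1
    constructor
    · calc D (D z y) y = D z (D y y) := (h2 _ _ _).symm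
        _ = D z y := by rw [h1]
    · calc D y (D z y) = D y (D y z) := h3 _ _ _
        _ = D (D y y) z := h2 _ _ _
        _ = D y z := by rw [h1]
        _ = y := hyz
  · rintro w ⟨y₂, w', hy2, hww', hw'y2⟩ t _
    have hw'y : D w' y = w' := by
      calc D w' y = D (D w' y₂) y := by rw [hw'y2]
        _ = D w' (D y₂ y) := (h2 _ _ _).symm
        _ = D w' y₂ := by rw [hy2.2]
        _ = w' := hw'y2
    have hwy : D w y = w := by
      calc D w y = D (D w w') y := by rw [hww'.1]
        _ = D w (D w' y) := (h2 _ _ _).symm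
        _ = D w w' := by rw [hw'y]
        _ = w := hww'.1
    calc D (D t y) w = D t (D y w) := (h2 _ _ _).symm
      _ = D t (D w y) := h3 _ _ _
      _ = D t w := by rw [hwy]
end

section
/- Let A = ((A_i)_{i∈I}, (f_{i,j})) be a sup-semilattice inductive system of Σ-algebras (Σ without nullary symbols), and let Pl(A) be the Płonka sum: the Σ-algebra on ⨿_{i∈I} A_i with σ((x_j, i_j)_{j<n}) = (σ^{A_s}((f_{i_j, s}(x_j))_{j<n}), s) where s = ⨆_{j<n} i_j, together with D^A((x,j),(y,k)) = (f_{j, j⊔k}(x), j⊔k). Then D^A is a Płonka operator for Pl(A): it satisfies (D4) D^A(σ((p_j)), q) = σ((D^A(p_j, q))_j) and (D5) D^A(q, σ((p_j))) = D^A(q, D^A_n((p_j))) for every n-ary σ, where D^A_n is the n-fold iterate of D^A. -/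
/-- Supremum of a nonempty finite family in a sup-semilattice. -/
def famSup {I : Type*} [SemilatticeSup I] : (n : ℕ) → (Fin (n + 1) → I) → I
  | 0, x => x 0
  | n + 1, x => x 0 ⊔ famSup n (fun k => x k.succ)

theorem le_famSup {I : Type*} [SemilatticeSup I] :
    ∀ (n : ℕ) (x : Fin (n + 1) → I) (k : Fin (n + 1)), x k ≤ famSup n x
  | 0, x, k => by
      have hk : k = 0 := Fin.fin_one_eq_zero k
      subst hk; exact le_rfl
  | n + 1, x, k => by
      cases k using Fin.cases with
      | zero => exact le_sup_left
      | succ k' => exact le_trans (le_famSup n (fun j => x j.succ) k') le_sup_right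

/-- The Płonka operation on the disjoint union of an inductive system. -/
def PlD {I : Type*} [SemilatticeSup I] {A : I → Type*}
    (f : ∀ i j : I, i ≤ j → A i → A j) :
    (Σ i, A i) → (Σ i, A i) → (Σ i, A i) :=
  fun p q => ⟨p.1 ⊔ q.1, f p.1 (p.1 ⊔ q.1) le_sup_left p.2⟩

/-- The Σ-algebra structure of the Płonka sum on the disjoint union:
`σ((x_j, i_j)_j) = (σ^{A_s}((f_{i_j, s}(x_j))_j), s)` with `s = ⨆_j i_j`. -/
def PlF {I : Type*} [SemilatticeSup I] {A : I → Type*} (Sig : ℕ → Type*)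
    (F : ∀ (i : I) (n : ℕ), Sig n → (Fin (n + 1) → A i) → A i)
    (f : ∀ i j : I, i ≤ j → A i → A j) :
    ∀ n : ℕ, Sig n → (Fin (n + 1) → Σ i, A i) → Σ i, A i :=
  fun n σ x =>
    ⟨famSup n (fun j => (x j).1),
      F _ n σ (fun j =>
        f (x j).1 (famSup n (fun j => (x j).1)) (le_famSup n (fun j => (x j).1) j) (x j).2)⟩

/-!
On first components, `PlF` is the supremum of the indices and `D^A` is their join, so
(D5) holds because `D^A(q, -)` only sees the index of its second argument, and the iterate
`D^A_n(p)` has the same index `⨆ i_j` as `σ(p)`. For (D4), both sides live over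
`(⨆ i_j) ⊔ k = ⨆ (i_j ⊔ k)`; pushing the transition maps through `σ` (they are
homomorphisms) and composing them shows that both are `σ` evaluated at the images of the
`x_j` in that common fibre.
-/

theorem famSup_sup_right {I : Type*} [SemilatticeSup I] :
    ∀ (n : ℕ) (x : Fin (n + 1) → I) (c : I),
      famSup n (fun j => x j ⊔ c) = famSup n x ⊔ c
  | 0, _, _ => rfl
  | n + 1, x, c => by
    change x 0 ⊔ c ⊔ famSup n (fun k => x k.succ ⊔ c) = x 0 ⊔ famSup n (fun k => x k.succ) ⊔ c
    rw [famSup_sup_right n, sup_sup_sup_comm, sup_idem]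

section PlonkaSum

variable {I : Type*} [SemilatticeSup I] {A : I → Type*} (f : ∀ i j : I, i ≤ j → A i → A j)

theorem fst_DR_PlD :
    ∀ (n : ℕ) (p : Fin (n + 1) → Σ i, A i), (DR (PlD f) n p).1 = famSup n (fun j => (p j).1)
  | 0, _ => rfl
  | n + 1, p => congrArg ((p 0).1 ⊔ ·) (fst_DR_PlD n fun k => p k.succ)

theorem PlD_eq_of_fst_eq (q : Σ i, A i) {X Y : Σ i, A i} (h : X.1 = Y.1) :
    PlD f q X = PlD f q Y := by
  obtain ⟨i, x⟩ := X
  obtain ⟨_, y⟩ := Y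
  subst h
  rfl

variable (Sig : ℕ → Type*) (F : ∀ (i : I) (n : ℕ), Sig n → (Fin (n + 1) → A i) → A i)

def PlFAt {n : ℕ} (σ : Sig n) (p : Fin (n + 1) → Σ i, A i) (t : I) (ht : ∀ j, (p j).1 ≤ t) :
    Σ i, A i :=
  ⟨t, F t n σ fun j => f (p j).1 t (ht j) (p j).2⟩

theorem PlFAt_congr {n : ℕ} (σ : Sig n) (p : Fin (n + 1) → Σ i, A i) {t t' : I}
    (ht : ∀ j, (p j).1 ≤ t) (ht' : ∀ j, (p j).1 ≤ t') (h : t = t') :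
    PlFAt f Sig F σ p t ht = PlFAt f Sig F σ p t' ht' := by
  subst h
  rfl

theorem PlF_eq_PlFAt (n : ℕ) (σ : Sig n) (p : Fin (n + 1) → Σ i, A i) :
    PlF Sig F f n σ p = PlFAt f Sig F σ p (famSup n fun j => (p j).1) (le_famSup n _) :=
  rfl

variable {f}

theorem PlD_PlFAt
    (hcomp : ∀ (i j k : I) (hij : i ≤ j) (hjk : j ≤ k) (x : A i),
      f j k hjk (f i j hij x) = f i k (hij.trans hjk) x)
    (hhom : ∀ (i j : I) (hij : i ≤ j) (n : ℕ) (σ : Sig n) (x : Fin (n + 1) → A i),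
      f i j hij (F i n σ x) = F j n σ (fun k => f i j hij (x k)))
    {n : ℕ} (σ : Sig n) (p : Fin (n + 1) → Σ i, A i) (t : I) (ht : ∀ j, (p j).1 ≤ t)
    (q : Σ i, A i) :
    PlD f (PlFAt f Sig F σ p t ht) q =
      PlFAt f Sig F σ p (t ⊔ q.1) fun j => (ht j).trans le_sup_left := by
  unfold PlD PlFAt
  simp only [hhom, hcomp]

theorem PlF_PlD_right
    (hcomp : ∀ (i j k : I) (hij : i ≤ j) (hjk : j ≤ k) (x : A i),
      f j k hjk (f i j hij x) = f i k (hij.trans hjk) x)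
    (n : ℕ) (σ : Sig n) (p : Fin (n + 1) → Σ i, A i) (q : Σ i, A i) :
    PlF Sig F f n σ (fun j => PlD f (p j) q) =
      PlFAt f Sig F σ p (famSup n fun j => (p j).1 ⊔ q.1)
        fun j => le_sup_left.trans (le_famSup n (fun j => (p j).1 ⊔ q.1) j) := by
  unfold PlF PlD PlFAt
  simp only [hcomp]

end PlonkaSum

theorem plonka_sum_operator_general {I : Type*} [SemilatticeSup I] {A : I → Type*}
    (Sig : ℕ → Type*)
    (F : ∀ (i : I) (n : ℕ), Sig n → (Fin (n + 1) → A i) → A i)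
    (f : ∀ i j : I, i ≤ j → A i → A j)
    (hcomp : ∀ (i j k : I) (hij : i ≤ j) (hjk : j ≤ k) (x : A i),
      f j k hjk (f i j hij x) = f i k (hij.trans hjk) x)
    (hhom : ∀ (i j : I) (hij : i ≤ j) (n : ℕ) (σ : Sig n)
        (x : Fin (n + 1) → A i),
      f i j hij (F i n σ x) = F j n σ (fun k => f i j hij (x k))) :
    (∀ (n : ℕ) (σ : Sig n) (p : Fin (n + 1) → Σ i, A i) (q : Σ i, A i),
      PlD f (PlF Sig F f n σ p) q =
        PlF Sig F f n σ (fun j => PlD f (p j) q)) ∧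
      (∀ (n : ℕ) (σ : Sig n) (p : Fin (n + 1) → Σ i, A i) (q : Σ i, A i),
        PlD f q (PlF Sig F f n σ p) = PlD f q (DR (PlD f) n p)) := by
  refine ⟨fun n σ p q => ?_, fun n σ p q => PlD_eq_of_fst_eq f q (fst_DR_PlD f n p).symm⟩
  rw [PlF_eq_PlFAt, PlD_PlFAt Sig F hcomp hhom, PlF_PlD_right Sig F hcomp]
  exact PlFAt_congr f Sig F σ p _ _ (famSup_sup_right n _ q.1).symm

/-- For a sup-semilattice inductive system of Σ-algebras (Σ without nullary
symbols), `D^A` is a Płonka operator for the Płonka sum: it satisfies (D4)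
and (D5). -/
theorem plonka_sum_operator {I : Type*} [SemilatticeSup I] {A : I → Type*}
    (Sig : ℕ → Type*)
    (F : ∀ (i : I) (n : ℕ), Sig n → (Fin (n + 1) → A i) → A i)
    (f : ∀ i j : I, i ≤ j → A i → A j)
    (hid : ∀ (i : I) (x : A i), f i i le_rfl x = x)
    (hcomp : ∀ (i j k : I) (hij : i ≤ j) (hjk : j ≤ k) (x : A i),
      f j k hjk (f i j hij x) = f i k (hij.trans hjk) x)
    (hhom : ∀ (i j : I) (hij : i ≤ j) (n : ℕ) (σ : Sig n)
        (x : Fin (n + 1) → A i),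
      f i j hij (F i n σ x) = F j n σ (fun k => f i j hij (x k))) :
    (∀ (n : ℕ) (σ : Sig n) (p : Fin (n + 1) → Σ i, A i) (q : Σ i, A i),
      PlD f (PlF Sig F f n σ p) q =
        PlF Sig F f n σ (fun j => PlD f (p j) q)) ∧
      (∀ (n : ℕ) (σ : Sig n) (p : Fin (n + 1) → Σ i, A i) (q : Σ i, A i),
        PlD f q (PlF Sig F f n σ p) = PlD f q (DR (PlD f) n p)) :=
  plonka_sum_operator_general Sig F f hcomp hhom
end
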